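/- arXiv:1302.6659 — 4 statements merged into one kernel-verified Lean document; each statement's English description precedes it below -/
import Mathlib

section
/- Let y be an integer with 0 ≤ y ≤ n−1, let v ∈ [0,1] and c ∈ (0,1), and define G(θ) = (1−v) F_θ(y−1) + v F_θ(y) for θ ∈ [0,1]. If G(0) > c (i.e., if y ≥ 1, or if y = 0 and v > c), then there exists a unique θ ∈ (0,1) with G(θ) = c. (This makes the upper endpoint of Stevens' randomized confidence interval well defined.) -/
/-- The Binomial(n, θ) probability mass function `f_θ(y) = C(n,y) θ^y (1-θ)^(n-y)`. -/
noncomputable def binomP (n : ℕ) (θ : ℝ) (y : ℕ) : ℝ :=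
  (n.choose y : ℝ) * θ ^ y * (1 - θ) ^ (n - y)

/-- `F_θ(y-1) = ∑_{j=0}^{y-1} f_θ(j)`, with the convention `F_θ(-1) = 0`. -/
noncomputable def binomCDFpred (n : ℕ) (θ : ℝ) (y : ℕ) : ℝ :=
  ∑ j ∈ Finset.range y, binomP n θ j

/-- The Binomial(n, θ) cumulative distribution function `F_θ(y) = ∑_{j=0}^{y} f_θ(j)`. -/
noncomputable def binomCDF (n : ℕ) (θ : ℝ) (y : ℕ) : ℝ :=
  ∑ j ∈ Finset.range (y + 1), binomP n θ j

/-!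
Writing binomial probabilities as Bernstein polynomials, the derivative of `θ ↦ F_θ(y)`
telescopes to `-n C(n-1,y) θ^y (1-θ)^(n-1-y)`, so `F_θ(y)` is strictly decreasing on `[0,1]` for
`y < n`, while `F_θ(-1) = 0`. Hence `G` is continuous and strictly decreasing on `[0,1]` with
`G(1) = 0 < c < G(0)`: the intermediate value theorem gives a root of `G = c`, unique by
monotonicity and interior because `c` differs from both endpoint values.
-/

open Finset Polynomial Set

theorem StrictAntiOn.existsUnique_mem_Ioo_eq {α δ : Type*} [ConditionallyCompleteLinearOrder α]
    [TopologicalSpace α] [OrderTopology α] [DenselyOrdered α] [LinearOrder δ]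
    [TopologicalSpace δ] [OrderClosedTopology δ] {f : α → δ} {a b : α} {c : δ}
    (hf_anti : StrictAntiOn f (Icc a b)) (hab : a ≤ b) (hf : ContinuousOn f (Icc a b))
    (hb : f b < c) (ha : c < f a) :
    ∃! x, x ∈ Ioo a b ∧ f x = c := by
  obtain ⟨x, hx, hfx⟩ := intermediate_value_Icc' hab hf ⟨hb.le, ha.le⟩
  have hxa : a ≠ x := by rintro rfl; exact ha.ne' hfx
  have hxb : x ≠ b := by rintro rfl; exact hb.ne hfx
  refine ⟨x, ⟨⟨hx.1.lt_of_ne hxa, hx.2.lt_of_ne hxb⟩, hfx⟩, ?_⟩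
  rintro x' ⟨hx', hfx'⟩
  exact hf_anti.injOn (Ioo_subset_Icc_self hx') hx (hfx'.trans hfx.symm)

theorem derivative_sum_range_bernsteinPolynomial (R : Type*) [CommRing R] (m y : ℕ) :
    derivative (∑ j ∈ range (y + 1), bernsteinPolynomial R (m + 1) j) =
      -((m : R[X]) + 1) * bernsteinPolynomial R m y := by
  induction y with
  | zero => simp [bernsteinPolynomial.derivative_zero]
  | succ k ih =>
    rw [sum_range_succ, derivative_add, ih, bernsteinPolynomial.derivative_succ]
    push_cast
    ring

theorem binomP_eq_eval_bernsteinPolynomial (n : ℕ) (θ : ℝ) (j : ℕ) :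
    binomP n θ j = (bernsteinPolynomial ℝ n j).eval θ := by
  simp [binomP, bernsteinPolynomial]

theorem hasDerivAt_binomCDF (m y : ℕ) (θ : ℝ) :
    HasDerivAt (fun t => binomCDF (m + 1) t y) (-((m : ℝ) + 1) * binomP m θ y) θ := by
  have h := (∑ j ∈ range (y + 1), bernsteinPolynomial ℝ (m + 1) j).hasDerivAt θ
  rw [derivative_sum_range_bernsteinPolynomial] at h
  simpa [binomCDF, binomP_eq_eval_bernsteinPolynomial, eval_finsetSum] using h

theorem binomP_pos {n j : ℕ} (hj : j ≤ n) {θ : ℝ} (hθ : θ ∈ Ioo (0 : ℝ) 1) :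
    0 < binomP n θ j := by
  have hchoose : (0 : ℝ) < n.choose j := by exact_mod_cast Nat.choose_pos hj
  exact mul_pos (mul_pos hchoose (pow_pos hθ.1 j)) (pow_pos (sub_pos.mpr hθ.2) (n - j))

theorem binomP_one_of_lt {n j : ℕ} (hj : j < n) : binomP n 1 j = 0 := by
  simp [binomP, zero_pow (Nat.sub_ne_zero_of_lt hj)]

theorem binomCDFpred_one {n y : ℕ} (hy : y ≤ n) : binomCDFpred n 1 y = 0 :=
  sum_eq_zero fun _ hj => binomP_one_of_lt ((mem_range.mp hj).trans_le hy)

theorem binomCDF_one {n y : ℕ} (hy : y < n) : binomCDF n 1 y = 0 :=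
  binomCDFpred_one (n := n) (y := y + 1) hy

theorem binomCDF_strictAntiOn {n y : ℕ} (hy : y < n) :
    StrictAntiOn (fun θ => binomCDF n θ y) (Icc 0 1) := by
  obtain ⟨m, rfl⟩ : ∃ m, n = m + 1 := ⟨n - 1, by omega⟩
  refine strictAntiOn_of_deriv_neg (convex_Icc 0 1)
    (fun θ _ => (hasDerivAt_binomCDF m y θ).continuousAt.continuousWithinAt) fun θ hθ => ?_
  rw [interior_Icc] at hθ
  rw [(hasDerivAt_binomCDF m y θ).deriv]
  exact mul_neg_of_neg_of_pos (by linarith [m.cast_nonneg (α := ℝ)]) (binomP_pos (by omega) hθ)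

theorem binomCDFpred_antitoneOn {n y : ℕ} (hy : y ≤ n) :
    AntitoneOn (fun θ => binomCDFpred n θ y) (Icc 0 1) := by
  cases y with
  | zero => simp [binomCDFpred, antitoneOn_const]
  | succ k => exact (binomCDF_strictAntiOn (n := n) (y := k) hy).antitoneOn

/-- Let `0 ≤ y ≤ n-1`, `v ∈ [0,1]`, `c ∈ (0,1)` and `G(θ) = (1-v) F_θ(y-1) + v F_θ(y)`.
If `G(0) > c` then there is a unique `θ ∈ (0,1)` with `G(θ) = c` (well-definedness of the
upper endpoint of Stevens' randomized confidence interval). -/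
theorem stmt_2 (n : ℕ) (hn : 1 ≤ n) (y : ℕ) (hy : y ≤ n - 1)
    (v : ℝ) (hv : v ∈ Set.Icc (0 : ℝ) 1) (c : ℝ) (hc : c ∈ Set.Ioo (0 : ℝ) 1)
    (hG0 : (1 - v) * binomCDFpred n 0 y + v * binomCDF n 0 y > c) :
    ∃! θ : ℝ, θ ∈ Set.Ioo (0 : ℝ) 1 ∧
      (1 - v) * binomCDFpred n θ y + v * binomCDF n θ y = c := by
  have hyn : y < n := by omega
  set G := fun θ => (1 - v) * binomCDFpred n θ y + v * binomCDF n θ y with hG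
  have hG_cont : ContinuousOn G (Icc 0 1) := by
    simp only [hG, binomCDFpred, binomCDF, binomP]
    fun_prop
  have hG_one : G 1 = 0 := by simp [G, binomCDFpred_one hyn.le, binomCDF_one hyn]
  have hG_anti : StrictAntiOn G (Icc 0 1) := by
    rcases hv.1.eq_or_lt with rfl | hv_pos
    · obtain ⟨k, rfl⟩ : ∃ k, y = k + 1 := Nat.exists_eq_succ_of_ne_zero <| by
        rintro rfl
        simp [binomCDFpred] at hG0
        linarith [hc.1]
      simpa [G, binomCDFpred, binomCDF] using binomCDF_strictAntiOn (n := n) (y := k) (by omega)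
    · refine AntitoneOn.add_strictAnti (fun a ha b hb hab => ?_) fun a ha b hb hab => ?_
      · exact mul_le_mul_of_nonneg_left (binomCDFpred_antitoneOn hyn.le ha hb hab)
          (sub_nonneg.mpr hv.2)
      · exact mul_lt_mul_of_pos_left (binomCDF_strictAntiOn hyn ha hb hab) hv_pos
  exact hG_anti.existsUnique_mem_Ioo_eq zero_le_one hG_cont (hG_one.trans_lt hc.1) hG0
end

section
/- Let α ∈ (0,1) and θ ∈ (0,1). Suppose ℓ : {0,…,n} × [0,1] → [0,1] satisfies: ℓ(0,v) = 0 whenever v ≤ 1−α/2; ℓ(n,v) = 1 whenever v ≥ 1−α/2; and in all other cases (1−v)(1 − F_{ℓ(y,v)}(y−1)) + v (1 − F_{ℓ(y,v)}(y)) = α/2. Then Σ_{y=0}^{n} f_θ(y) · Leb({v ∈ [0,1] : ℓ(y,v) > θ}) = α/2, where Leb denotes Lebesgue measure on [0,1]; that is, Stevens' randomized lower endpoint satisfies P_θ(θ < ℓ(Y,V)) = α/2 exactly, for Y Binomial(n,θ) and V uniform on (0,1) independent of Y. -/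
/-!
For fixed `y` and `v`, the randomized distribution function
`t ↦ F_t(y-1) + v f_t(y)` is strictly decreasing on `[0,1]`: its derivative is
`-((1-v) D_y(t) + v D_{y+1}(t))`, where `D_j(t) = j C(n,j) t^(j-1) (1-t)^(n-j)` is the derivative
of the upper tail `P_t(Y ≥ j)`. Hence `θ < ℓ(y,v)` exactly when `F_θ(y-1) + v f_θ(y) > 1 - α/2`,
and the boundary cases `ℓ = 0`, `ℓ = 1` obey the same rule. So `f_θ(y)` times the measure of
`{v | θ < ℓ(y,v)}` is the length of `[F_θ(y-1), F_θ(y)] ∩ (1 - α/2, ∞)`; these intervals tile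
`[0,1]`, and the sum is `1 - (1 - α/2) = α/2`.
-/

open MeasureTheory

open Set

noncomputable def binomTailDeriv (n : ℕ) (t : ℝ) (j : ℕ) : ℝ :=
  (j : ℝ) * (n.choose j : ℝ) * t ^ (j - 1) * (1 - t) ^ (n - j)

noncomputable def binomRandCDF (n : ℕ) (t : ℝ) (y : ℕ) (v : ℝ) : ℝ :=
  binomCDFpred n t y + v * binomP n t y

section Binomial

variable (n : ℕ) (t : ℝ)

lemma binomCDFpred_zero : binomCDFpred n t 0 = 0 := Finset.sum_range_zero _

lemma binomCDFpred_succ (y : ℕ) :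
    binomCDFpred n t (y + 1) = binomCDFpred n t y + binomP n t y :=
  Finset.sum_range_succ _ _

lemma binomCDFpred_succ_self : binomCDFpred n t (n + 1) = 1 :=
  calc binomCDFpred n t (n + 1) = (t + (1 - t)) ^ n := by
        rw [add_pow]; exact Finset.sum_congr rfl fun j _ => by rw [binomP]; ring
    _ = 1 := by rw [add_sub_cancel, one_pow]

lemma binomCDF_eq_binomCDFpred_succ (y : ℕ) : binomCDF n t y = binomCDFpred n t (y + 1) := rfl

lemma binomRandCDF_zero (v : ℝ) : binomRandCDF n t 0 v = v * (1 - t) ^ n := by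
  simp [binomRandCDF, binomCDFpred_zero, binomP]

lemma binomRandCDF_self (v : ℝ) : binomRandCDF n t n v = 1 - (1 - v) * t ^ n := by
  have h := binomCDFpred_succ_self n t
  rw [binomCDFpred_succ] at h
  simp only [binomRandCDF, binomP, Nat.choose_self, Nat.sub_self] at h ⊢
  linear_combination h

lemma one_sub_binomRandCDF (y : ℕ) (v : ℝ) :
    (1 - v) * (1 - binomCDFpred n t y) + v * (1 - binomCDF n t y) = 1 - binomRandCDF n t y v := by
  rw [binomCDF_eq_binomCDFpred_succ, binomCDFpred_succ, binomRandCDF]; ring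

variable {n t}

lemma binomP_pos_s7 {y : ℕ} (hy : y ≤ n) (ht : t ∈ Ioo 0 1) : 0 < binomP n t y := by
  have : 0 < 1 - t := sub_pos.2 ht.2
  have := ht.1
  have : (0 : ℝ) < n.choose y := mod_cast Nat.choose_pos hy
  unfold binomP; positivity

lemma binomTailDeriv_nonneg (j : ℕ) (ht : t ∈ Ioo 0 1) : 0 ≤ binomTailDeriv n t j := by
  have : 0 < 1 - t := sub_pos.2 ht.2
  have := ht.1
  unfold binomTailDeriv; positivity

lemma binomTailDeriv_pos {j : ℕ} (hj1 : 1 ≤ j) (hjn : j ≤ n) (ht : t ∈ Ioo 0 1) :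
    0 < binomTailDeriv n t j := by
  have : 0 < 1 - t := sub_pos.2 ht.2
  have := ht.1
  have : (0 : ℝ) < n.choose j := mod_cast Nat.choose_pos hjn
  have : (0 : ℝ) < j := mod_cast hj1
  unfold binomTailDeriv; positivity

end Binomial

section Derivatives

variable {n : ℕ}

lemma hasDerivAt_binomP {j : ℕ} (hj : j ≤ n) (t : ℝ) :
    HasDerivAt (fun s => binomP n s j) (binomTailDeriv n t j - binomTailDeriv n t (j + 1)) t := by
  have hprod := ((hasDerivAt_pow j t).fun_mul
    (((hasDerivAt_id' t).const_sub 1).fun_pow (n - j))).const_mul (n.choose j : ℝ)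
  have hfun : (fun s => binomP n s j) = fun s => (n.choose j : ℝ) * (s ^ j * (1 - s) ^ (n - j)) :=
    funext fun s => by rw [binomP]; ring
  rw [hfun]
  refine hprod.congr_deriv ?_
  have hchoose : ((j : ℝ) + 1) * (n.choose (j + 1) : ℝ) = (n.choose j : ℝ) * ((n : ℝ) - j) := by
    have h := congrArg (Nat.cast : ℕ → ℝ) (Nat.choose_succ_right_eq n j)
    push_cast [Nat.cast_sub hj] at h
    linarith
  simp only [binomTailDeriv]
  rw [Nat.add_sub_cancel, Nat.sub_succ', Nat.cast_sub hj]
  push_cast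
  linear_combination (t ^ j * (1 - t) ^ (n - j - 1)) * hchoose

lemma hasDerivAt_binomCDFpred {y : ℕ} (hy : y ≤ n + 1) (t : ℝ) :
    HasDerivAt (fun s => binomCDFpred n s y) (-binomTailDeriv n t y) t := by
  have hsum := HasDerivAt.fun_sum (u := Finset.range y) (A := fun j s => binomP n s j) fun j hj =>
    hasDerivAt_binomP (by have := Finset.mem_range.1 hj; omega) t
  rw [Finset.sum_range_sub'] at hsum
  refine hsum.congr_deriv ?_
  simp [binomTailDeriv]

lemma hasDerivAt_binomRandCDF {y : ℕ} (hy : y ≤ n) (v t : ℝ) :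
    HasDerivAt (fun s => binomRandCDF n s y v)
      (-((1 - v) * binomTailDeriv n t y + v * binomTailDeriv n t (y + 1))) t := by
  refine ((hasDerivAt_binomCDFpred (by omega) t).add
    ((hasDerivAt_binomP hy t).const_mul v)).congr_deriv ?_
  ring

end Derivatives

lemma strictAntiOn_binomRandCDF {n y : ℕ} {v : ℝ} (hv : v ∈ Icc 0 1)
    (hyv : (v < 1 ∧ 1 ≤ y ∧ y ≤ n) ∨ (0 < v ∧ y < n)) :
    StrictAntiOn (fun t => binomRandCDF n t y v) (Icc 0 1) := by
  have hy : y ≤ n := by omega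
  refine strictAntiOn_of_deriv_neg (convex_Icc 0 1)
    (fun t _ => (hasDerivAt_binomRandCDF hy v t).continuousAt.continuousWithinAt) fun t ht => ?_
  rw [interior_Icc] at ht
  rw [(hasDerivAt_binomRandCDF hy v t).deriv, neg_lt_zero]
  have h0 := binomTailDeriv_nonneg (n := n) y ht
  have h1 := binomTailDeriv_nonneg (n := n) (y + 1) ht
  rcases hyv with ⟨hv1, hy1, hyn⟩ | ⟨hv0, hyn⟩
  · nlinarith [binomTailDeriv_pos hy1 hyn ht, hv.1]
  · nlinarith [binomTailDeriv_pos (Nat.le_add_left 1 y) hyn ht, hv.2]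

lemma mul_volume_Icc_lt_add_mul {a x f : ℝ} (hf : 0 < f) :
    f * (volume {v | v ∈ Icc 0 1 ∧ a < x + v * f}).toReal = max 0 (x + f - a) - max 0 (x - a) := by
  obtain ⟨c, rfl⟩ : ∃ c, a = x + c * f := ⟨(a - x) / f, by field_simp; ring⟩
  have hset : {v | v ∈ Icc 0 1 ∧ x + c * f < x + v * f} = Icc 0 1 ∩ Ioi c := by
    ext v; simp [mul_lt_mul_iff_left₀ hf]
  rw [hset, ← measure_congr ((Ioc_ae_eq_Icc (μ := volume)).inter (ae_eq_refl (Ioi c))),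
    Ioc_inter_Ioi, Real.volume_Ioc, ENNReal.toReal_ofReal']
  simp only [max_def]
  split_ifs <;> nlinarith

structure IsStevensLowerEndpoint (n : ℕ) (α : ℝ) (l : ℕ → ℝ → ℝ) : Prop where
  mem_Icc : ∀ y ≤ n, ∀ v ∈ Icc (0 : ℝ) 1, l y v ∈ Icc (0 : ℝ) 1
  apply_zero : ∀ v ∈ Icc (0 : ℝ) 1, v ≤ 1 - α / 2 → l 0 v = 0
  apply_self : ∀ v ∈ Icc (0 : ℝ) 1, 1 - α / 2 ≤ v → l n v = 1
  solves : ∀ y ≤ n, ∀ v ∈ Icc (0 : ℝ) 1,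
    ¬(y = 0 ∧ v ≤ 1 - α / 2) → ¬(y = n ∧ 1 - α / 2 ≤ v) →
    (1 - v) * (1 - binomCDFpred n (l y v) y) + v * (1 - binomCDF n (l y v) y) = α / 2

lemma IsStevensLowerEndpoint.lt_apply_iff {n : ℕ} {α θ : ℝ} {l : ℕ → ℝ → ℝ}
    (hl : IsStevensLowerEndpoint n α l) (hn : 1 ≤ n) (hα : α ∈ Ioo 0 1) (hθ : θ ∈ Ioo 0 1)
    {y : ℕ} (hy : y ≤ n) {v : ℝ} (hv : v ∈ Icc 0 1) :
    θ < l y v ↔ 1 - α / 2 < binomRandCDF n θ y v := by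
  obtain ⟨hα0, hα1⟩ := hα
  obtain ⟨hθ0, hθ1⟩ := hθ
  by_cases hlow : y = 0 ∧ v ≤ 1 - α / 2
  · obtain ⟨rfl, hvα⟩ := hlow
    have : v * (1 - θ) ^ n ≤ v :=
      mul_le_of_le_one_right hv.1 (pow_le_one₀ (by linarith) (by linarith))
    rw [hl.apply_zero v hv hvα, binomRandCDF_zero]
    exact iff_of_false (by linarith) (by linarith)
  by_cases hhigh : y = n ∧ 1 - α / 2 ≤ v
  · obtain ⟨rfl, hvα⟩ := hhigh
    have : (1 - v) * θ ^ y < α / 2 := by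
      rcases hv.2.lt_or_eq with hv1 | rfl
      · nlinarith [pow_lt_one₀ hθ0.le hθ1 (by omega : y ≠ 0)]
      · linarith
    rw [hl.apply_self v hv hvα, binomRandCDF_self]
    exact iff_of_true hθ1 (by linarith)
  have hmono : (v < 1 ∧ 1 ≤ y ∧ y ≤ n) ∨ (0 < v ∧ y < n) := by
    by_cases hy0 : y = 0
    · exact .inr ⟨by linarith [not_le.1 fun h => hlow ⟨hy0, h⟩], by omega⟩
    by_cases hyn : y = n
    · exact .inl ⟨by linarith [not_le.1 fun h => hhigh ⟨hyn, h⟩], by omega, hy⟩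
    rcases hv.2.lt_or_eq with hv1 | hv1
    · exact .inl ⟨hv1, by omega, hy⟩
    · exact .inr ⟨by linarith, by omega⟩
  have heq := hl.solves y hy v hv hlow hhigh
  rw [one_sub_binomRandCDF] at heq
  rw [← (strictAntiOn_binomRandCDF hv hmono).lt_iff_gt (hl.mem_Icc y hy v hv) ⟨hθ0.le, hθ1.le⟩]
  constructor <;> intro <;> linarith

/-- Stevens' randomized lower endpoint `ℓ(y,v)` — equal to `0` for `y = 0, v ≤ 1-α/2`, to `1`
for `y = n, v ≥ 1-α/2`, and otherwise solving `(1-v)(1 - F_θ(y-1)) + v(1 - F_θ(y)) = α/2` —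
satisfies `P_θ(θ < ℓ(Y,V)) = α/2` exactly, for `Y ~ Binomial(n,θ)` and `V ~ U(0,1)`
independent. -/
theorem stmt_7 (n : ℕ) (hn : 1 ≤ n) (α : ℝ) (hα : α ∈ Set.Ioo (0 : ℝ) 1)
    (θ : ℝ) (hθ : θ ∈ Set.Ioo (0 : ℝ) 1)
    (l : ℕ → ℝ → ℝ)
    (hl01 : ∀ y ≤ n, ∀ v ∈ Set.Icc (0 : ℝ) 1, l y v ∈ Set.Icc (0 : ℝ) 1)
    (hl0 : ∀ v ∈ Set.Icc (0 : ℝ) 1, v ≤ 1 - α / 2 → l 0 v = 0)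
    (hln : ∀ v ∈ Set.Icc (0 : ℝ) 1, 1 - α / 2 ≤ v → l n v = 1)
    (hl : ∀ y ≤ n, ∀ v ∈ Set.Icc (0 : ℝ) 1,
      ¬(y = 0 ∧ v ≤ 1 - α / 2) → ¬(y = n ∧ 1 - α / 2 ≤ v) →
      (1 - v) * (1 - binomCDFpred n (l y v) y) + v * (1 - binomCDF n (l y v) y) = α / 2) :
    ∑ y ∈ Finset.range (n + 1),
      binomP n θ y *
        (volume {v : ℝ | v ∈ Set.Icc (0 : ℝ) 1 ∧ θ < l y v}).toReal = α / 2 := by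
  have hL : IsStevensLowerEndpoint n α l := ⟨hl01, hl0, hln, hl⟩
  have hterm : ∀ y ∈ Finset.range (n + 1),
      binomP n θ y * (volume {v : ℝ | v ∈ Icc (0 : ℝ) 1 ∧ θ < l y v}).toReal =
        max 0 (binomCDFpred n θ (y + 1) - (1 - α / 2)) -
          max 0 (binomCDFpred n θ y - (1 - α / 2)) := by
    intro y hy
    have hy : y ≤ n := Nat.lt_succ_iff.1 (Finset.mem_range.1 hy)
    have hevent : {v : ℝ | v ∈ Icc (0 : ℝ) 1 ∧ θ < l y v} =
        {v | v ∈ Icc 0 1 ∧ 1 - α / 2 < binomCDFpred n θ y + v * binomP n θ y} :=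
      Set.ext fun v => and_congr_right fun hv => hL.lt_apply_iff hn hα hθ hy hv
    rw [hevent, mul_volume_Icc_lt_add_mul (binomP_pos_s7 hy hθ), binomCDFpred_succ]
  rw [Finset.sum_congr rfl hterm,
    Finset.sum_range_sub fun y => max 0 (binomCDFpred n θ y - (1 - α / 2)), binomCDFpred_succ_self,
    binomCDFpred_zero, max_eq_right (by linarith [hα.1]), max_eq_left (by linarith [hα.2])]
  ring
end

section
/- Let θ ∈ (0,1), and let M : {0,…,n} → ℕ with M(y) ≥ 1 for all y. Then for every t ∈ [0,1], Σ_{y=0}^{n} Σ_{k=0}^{M(y)−1} (f_θ(y)/M(y)) · 𝟙[(1 − k/M(y))·f_θ(y) + (1 − F_θ(y)) ≤ t] ≤ t. (If, conditional on Y = y, W̃ is uniformly distributed on {0, 1/M(y), …, (M(y)−1)/M(y)}, then the discrete randomized lower-tail p-value (1−W̃)·f_θ(Y) + 1 − F_θ(Y) is stochastically larger than a Uniform(0,1) random variable.) -/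
open Finset

section TailMass

variable {ι α β : Type*} [LinearOrder α] [AddCommMonoid β] [PartialOrder β]

def tailMass (s : Finset ι) (key : ι → α) (w : ι → β) (i : ι) : β :=
  ∑ j ∈ s with key i ≤ key j, w j

theorem sum_filter_tailMass_le_le [IsOrderedAddMonoid β] [DecidableLE β] (s : Finset ι)
    (key : ι → α) (w : ι → β) (hw : ∀ i ∈ s, 0 ≤ w i) {t : β} (ht : 0 ≤ t) :
    ∑ i ∈ s with tailMass s key w i ≤ t, w i ≤ t := by
  set hits := {i ∈ s | tailMass s key w i ≤ t}
  rcases hits.eq_empty_or_nonempty with hempty | hne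
  · rw [hempty, sum_empty]
    exact ht
  obtain ⟨i₀, hi₀, hmin⟩ := hits.exists_min_image key hne
  calc ∑ i ∈ hits, w i ≤ tailMass s key w i₀ :=
        sum_le_sum_of_subset_of_nonneg
          (fun j hj => mem_filter.2 ⟨(mem_filter.1 hj).1, hmin j hj⟩)
          (fun j hj _ => hw j (mem_filter.1 hj).1)
    _ ≤ t := (mem_filter.1 hi₀).2

end TailMass

theorem binomP_nonneg (n : ℕ) {θ : ℝ} (hθ : θ ∈ Set.Icc (0 : ℝ) 1) (y : ℕ) :
    0 ≤ binomP n θ y := by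
  have : 0 ≤ 1 - θ := sub_nonneg.2 hθ.2
  have := hθ.1
  unfold binomP
  positivity

theorem sum_range_binomP (n : ℕ) (θ : ℝ) : ∑ y ∈ range (n + 1), binomP n θ y = 1 := by
  have binomial := add_pow θ (1 - θ) n
  rw [add_sub_cancel, one_pow] at binomial
  exact binomial ▸ sum_congr rfl fun y _ => by rw [binomP]; ring

theorem one_sub_binomCDF {n y : ℕ} (θ : ℝ) (hy : y ≤ n) :
    1 - binomCDF n θ y = ∑ j ∈ Ico (y + 1) (n + 1), binomP n θ j := by
  rw [← sum_range_binomP n θ, binomCDF, ← sum_range_add_sum_Ico _ (by omega : y + 1 ≤ n + 1),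
    add_sub_cancel_left]

theorem tailMass_sigma_range_binomP (n : ℕ) (θ : ℝ) {M : ℕ → ℕ} (hM : ∀ y ≤ n, 1 ≤ M y)
    {y k : ℕ} (hy : y ≤ n) (hk : k < M y) :
    tailMass ((range (n + 1)).sigma fun y => range (M y)) (fun j => toLex (j.1, j.2))
        (fun j => binomP n θ j.1 / M j.1) ⟨y, k⟩ =
      (1 - k / M y) * binomP n θ y + (1 - binomCDF n θ y) := by
  rw [tailMass, sum_filter, sum_sigma, one_sub_binomCDF θ hy,
    ← sum_range_add_sum_Ico _ (by omega : y + 1 ≤ n + 1), sum_range_succ]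
  have before : ∀ y' ∈ range y, ∑ k' ∈ range (M y'),
      (if toLex (y, k) ≤ toLex (y', k') then binomP n θ y' / M y' else 0) = 0 := by
    intro y' hy'
    have : y' < y := mem_range.1 hy'
    exact sum_eq_zero fun k' _ => if_neg (by simp [Prod.Lex.toLex_le_toLex]; omega)
  have self : ∑ k' ∈ range (M y),
      (if toLex (y, k) ≤ toLex (y, k') then binomP n θ y / M y else 0) =
        (1 - k / M y) * binomP n θ y := by
    have hMpos : (0 : ℝ) < M y := by exact_mod_cast hk.trans_le' (Nat.zero_le k)
    simp only [Prod.Lex.toLex_le_toLex, lt_irrefl, true_and, false_or]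
    rw [← sum_filter, range_eq_Ico, Ico_filter_le, sum_const, Nat.card_Ico,
      max_eq_right (Nat.zero_le k), nsmul_eq_mul, Nat.cast_sub hk.le]
    field_simp
  have after : ∀ y' ∈ Ico (y + 1) (n + 1), ∑ k' ∈ range (M y'),
      (if toLex (y, k) ≤ toLex (y', k') then binomP n θ y' / M y' else 0) = binomP n θ y' := by
    intro y' hy'
    obtain ⟨hyy', hy'n⟩ := mem_Ico.1 hy'
    have hMpos : (0 : ℝ) < M y' := by exact_mod_cast hM y' (by omega)
    rw [sum_congr rfl fun k' _ => if_pos (Prod.Lex.toLex_le_toLex.2 (Or.inl (by omega))),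
      sum_const, card_range, nsmul_eq_mul]
    field_simp
  rw [sum_eq_zero before, self, sum_congr rfl after, zero_add]

theorem stmt_14_general (n : ℕ) (θ : ℝ) (hθ : θ ∈ Set.Ioo (0 : ℝ) 1)
    (M : ℕ → ℕ) (hM : ∀ y ≤ n, 1 ≤ M y) (t : ℝ) (ht : t ∈ Set.Icc (0 : ℝ) 1) :
    ∑ y ∈ Finset.range (n + 1), ∑ k ∈ Finset.range (M y),
      binomP n θ y / (M y : ℝ) *
        (if (1 - (k : ℝ) / (M y : ℝ)) * binomP n θ y + (1 - binomCDF n θ y) ≤ t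
          then (1 : ℝ) else 0) ≤ t := by
  set cells := (range (n + 1)).sigma fun y => range (M y)
  set key : (_ : ℕ) × ℕ → ℕ ×ₗ ℕ := fun j => toLex (j.1, j.2)
  set mass : (_ : ℕ) × ℕ → ℝ := fun j => binomP n θ j.1 / M j.1
  calc _ = ∑ i ∈ cells with tailMass cells key mass i ≤ t, mass i := by
        rw [sum_filter, sum_sigma]
        refine sum_congr rfl fun y hy => sum_congr rfl fun k hk => ?_
        rw [tailMass_sigma_range_binomP n θ hM (Nat.lt_succ_iff.1 (mem_range.1 hy))
          (mem_range.1 hk), mul_ite, mul_one, mul_zero]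
    _ ≤ t := sum_filter_tailMass_le_le cells key mass
        (fun j _ => div_nonneg (binomP_nonneg n (Set.Ioo_subset_Icc_self hθ) _)
          (Nat.cast_nonneg _))
        ht.1

/-- For `θ ∈ (0,1)`, `M : {0,…,n} → ℕ` with `M(y) ≥ 1`, and every `t ∈ [0,1]`:
`∑_{y=0}^{n} ∑_{k=0}^{M(y)-1} (f_θ(y)/M(y)) 𝟙[(1 - k/M(y)) f_θ(y) + (1 - F_θ(y)) ≤ t] ≤ t`
(the discrete randomized lower-tail p-value `(1-W̃) f_θ(Y) + 1 - F_θ(Y)` is stochastically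
larger than a `U(0,1)` random variable). -/
theorem stmt_14 (n : ℕ) (hn : 1 ≤ n) (θ : ℝ) (hθ : θ ∈ Set.Ioo (0 : ℝ) 1)
    (M : ℕ → ℕ) (hM : ∀ y ≤ n, 1 ≤ M y) (t : ℝ) (ht : t ∈ Set.Icc (0 : ℝ) 1) :
    ∑ y ∈ Finset.range (n + 1), ∑ k ∈ Finset.range (M y),
      binomP n θ y / (M y : ℝ) *
        (if (1 - (k : ℝ) / (M y : ℝ)) * binomP n θ y + (1 - binomCDF n θ y) ≤ t
          then (1 : ℝ) else 0) ≤ t :=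
  stmt_14_general n θ hθ M hM t ht
end

section
/- Let n₁ and n₂ be positive coprime integers. Then the number of distinct rational values taken by y₁/n₁ + y₂/n₂, as (y₁, y₂) ranges over {0, 1, …, n₁} × {0, 1, …, n₂}, equals (n₁+1)(n₂+1) − 1; the only coincidence of values is y₁/n₁ + y₂/n₂ = 1 at both (y₁, y₂) = (n₁, 0) and (y₁, y₂) = (0, n₂). (Hence the estimator Θ̂ = (1/2)(Y₁/n₁ + Y₂/n₂) obtained by splitting n = n₁ + n₂ Bernoulli trials into two groups of relatively prime sizes takes (n₁+1)(n₂+1) − 1 possible values; e.g., 24 × 25 − 1 = 599 for n₁ = 23, n₂ = 24.) -/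
/-!
Clearing denominators, `a/n₁ + b/n₂ = c/n₁ + d/n₂` becomes `(a - c) n₂ = (d - b) n₁`. By
coprimality `a - c = k n₁` and `d - b = k n₂` for an integer `k`, and since `0 ≤ a, c ≤ n₁` only
`k ∈ {-1, 0, 1}` is possible; `k = ±1` forces the two corners `(n₁, 0)` and `(0, n₂)`.
So the map is injective once the corner `(0, n₂)` is removed from the grid, which has
`(n₁ + 1)(n₂ + 1)` points.
-/

theorem Finset.card_image_eq_card_sub_one_of_injOn_erase {α β : Type*} [DecidableEq α]
    [DecidableEq β] {s : Finset α} {f : α → β} {a b : α} (ha : a ∈ s) (hb : b ∈ s.erase a)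
    (hab : f a = f b) (hinj : Set.InjOn f (s.erase a)) : (s.image f).card = s.card - 1 :=
  calc (s.image f).card = ((insert a (s.erase a)).image f).card := by rw [insert_erase ha]
    _ = ((s.erase a).image f).card := by
      rw [image_insert, hab, insert_eq_of_mem (mem_image_of_mem f hb)]
    _ = s.card - 1 := by rw [card_image_of_injOn hinj, card_erase_of_mem ha]

theorem mul_add_mul_eq_of_div_add_div_eq {K : Type*} [Field K] {n₁ n₂ a b c d : K}
    (hn₁ : n₁ ≠ 0) (hn₂ : n₂ ≠ 0) (h : a / n₁ + b / n₂ = c / n₁ + d / n₂) :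
    a * n₂ + b * n₁ = c * n₂ + d * n₁ := by
  field_simp at h
  linear_combination h

theorem exists_sub_eq_mul_of_mul_add_mul_eq {R : Type*} [CommRing R] [IsDomain R]
    {n₁ n₂ a b c d : R} (hco : IsCoprime n₁ n₂) (hn₁ : n₁ ≠ 0)
    (h : a * n₂ + b * n₁ = c * n₂ + d * n₁) : ∃ k, a - c = k * n₁ ∧ d - b = k * n₂ := by
  obtain ⟨k, hk⟩ : n₁ ∣ a - c := hco.dvd_of_dvd_mul_right ⟨d - b, by linear_combination h⟩
  exact ⟨k, by rw [hk, mul_comm], mul_left_cancel₀ hn₁ (by linear_combination -h + n₂ * hk)⟩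

theorem Nat.eq_or_corners_of_mul_add_mul_eq {n₁ n₂ a b c d : ℕ} (hn₁ : 0 < n₁)
    (hco : n₁.Coprime n₂) (ha : a ≤ n₁) (hc : c ≤ n₁) (hb : b ≤ n₂) (hd : d ≤ n₂)
    (h : a * n₂ + b * n₁ = c * n₂ + d * n₁) :
    (a, b) = (c, d) ∨ ((a, b) = (n₁, 0) ∧ (c, d) = (0, n₂)) ∨
      ((a, b) = (0, n₂) ∧ (c, d) = (n₁, 0)) := by
  have hn₁' : (0 : ℤ) < n₁ := by exact_mod_cast hn₁
  obtain ⟨k, hac, hdb⟩ := exists_sub_eq_mul_of_mul_add_mul_eq (a := (a : ℤ)) (b := b) (c := c)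
    (d := d) (Nat.isCoprime_iff_coprime.mpr hco) hn₁'.ne' (by exact_mod_cast h)
  have hk₁ : k ≤ 1 := by nlinarith
  have hk₂ : -1 ≤ k := by nlinarith
  simp only [Prod.mk.injEq]
  interval_cases k <;> omega

/-- For positive coprime `n₁, n₂`, the number of distinct rational values of
`y₁/n₁ + y₂/n₂` over `(y₁,y₂) ∈ {0,…,n₁} × {0,…,n₂}` is `(n₁+1)(n₂+1) - 1`; the only
coincidence of values is `y₁/n₁ + y₂/n₂ = 1` at both `(n₁,0)` and `(0,n₂)`. -/
theorem stmt_19 (n₁ n₂ : ℕ) (h₁ : 0 < n₁) (h₂ : 0 < n₂) (hco : Nat.Coprime n₁ n₂) :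
    ((Finset.range (n₁ + 1) ×ˢ Finset.range (n₂ + 1)).image
        (fun p : ℕ × ℕ => (p.1 : ℚ) / n₁ + (p.2 : ℚ) / n₂)).card
      = (n₁ + 1) * (n₂ + 1) - 1 ∧
    ∀ p ∈ Finset.range (n₁ + 1) ×ˢ Finset.range (n₂ + 1),
      ∀ q ∈ Finset.range (n₁ + 1) ×ˢ Finset.range (n₂ + 1),
        (p.1 : ℚ) / n₁ + (p.2 : ℚ) / n₂ = (q.1 : ℚ) / n₁ + (q.2 : ℚ) / n₂ →
          p = q ∨ (p = (n₁, 0) ∧ q = (0, n₂)) ∨ (p = (0, n₂) ∧ q = (n₁, 0)) := by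
  have coincidences : ∀ p ∈ Finset.range (n₁ + 1) ×ˢ Finset.range (n₂ + 1),
      ∀ q ∈ Finset.range (n₁ + 1) ×ˢ Finset.range (n₂ + 1),
        (p.1 : ℚ) / n₁ + (p.2 : ℚ) / n₂ = (q.1 : ℚ) / n₁ + (q.2 : ℚ) / n₂ →
          p = q ∨ (p = (n₁, 0) ∧ q = (0, n₂)) ∨ (p = (0, n₂) ∧ q = (n₁, 0)) := by
    rintro ⟨a, b⟩ hp ⟨c, d⟩ hq h
    simp only [Finset.mem_product, Finset.mem_range, Nat.lt_succ_iff] at hp hq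
    have hcross := mul_add_mul_eq_of_div_add_div_eq (by positivity) (by positivity) h
    exact Nat.eq_or_corners_of_mul_add_mul_eq h₁ hco hp.1 hq.1 hp.2 hq.2 (by exact_mod_cast hcross)
  refine ⟨?_, coincidences⟩
  rw [Finset.card_image_eq_card_sub_one_of_injOn_erase (a := (0, n₂)) (b := (n₁, 0))
    (by simp) (by simp [h₁.ne']) (by simp [h₁.ne', h₂.ne']), Finset.card_product]
  · simp
  · intro p hp q hq h
    obtain ⟨hp0, hp⟩ := Finset.mem_erase.mp hp
    obtain ⟨hq0, hq⟩ := Finset.mem_erase.mp hq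
    rcases coincidences p hp q hq h with h | ⟨-, rfl⟩ | ⟨rfl, -⟩
    exacts [h, absurd rfl hq0, absurd rfl hp0]
end
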